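/- Let r ≥ 1 and m ≥ 0 be integers, let λ_{i,q} ∈ ℝ for 1 ≤ i ≤ r and 1 ≤ q ≤ m, let Δ₁, …, Δ_r be strictly positive real numbers, let ε > 0, let N be a positive integer, and let K ∈ ℕ. Then there exist positive integers k₁, …, k_r, each divisible by N and each ≥ K, and an integer d, such that for all i and q one has ‖k_i·λ_{i,q}‖ < ε and |k_i·Δ_i − d| < ε. -/

import Mathlib

/-!
Let `g` be the point `((N Δᵢ)⁻¹, λᵢ_q / Δᵢ)` of the torus. Its orbit `n ↦ n • g` comes back
arbitrarily close to `0` for arbitrarily large `n`, as every orbit in a compact group does. For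
such an `n` put `kᵢ = N · round (n / (N Δᵢ))`: then `kᵢ Δᵢ - n` is small, and
`kᵢ λᵢ_q = n λᵢ_q / Δᵢ + (kᵢ Δᵢ - n) λᵢ_q / Δᵢ` is close to an integer, so `d = n` works.
-/

open Filter Topology

/-- The distance from a real number to the nearest integer. -/
noncomputable def nearestIntDist (x : ℝ) : ℝ := |x - round x|

theorem frequently_nsmul_mem_of_mem_nhds_zero {G : Type*} [AddGroup G] [TopologicalSpace G]
    [IsTopologicalAddGroup G] [CompactSpace G] (g : G) {U : Set G} (hU : U ∈ 𝓝 0) :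
    ∃ᶠ n : ℕ in atTop, n • g ∈ U := by
  -- two visits `i + K ≤ j` of the orbit to a small neighbourhood `W` of a cluster point
  -- give `(j - i) • g = j • g - i • g ∈ W - W ⊆ U`
  obtain ⟨a, ha⟩ := exists_clusterPt_of_compactSpace (map (· • g) (atTop : Filter ℕ))
  have hsub : Tendsto (fun p : G × G => p.2 - p.1) (𝓝 a ×ˢ 𝓝 a) (𝓝 0) := by
    rw [← nhds_prod_eq, ← sub_self a]
    exact (continuous_snd.sub continuous_fst).tendsto (a, a)
  obtain ⟨W, hW, hWU⟩ := mem_prod_self_iff.1 (hsub hU)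
  have hvisits : ∃ᶠ n : ℕ in atTop, n • g ∈ W := mapClusterPt_iff_frequently.1 ha W hW
  refine frequently_atTop.2 fun K => ?_
  obtain ⟨i, -, hi⟩ := frequently_atTop.1 hvisits 0
  obtain ⟨j, hij, hj⟩ := frequently_atTop.1 hvisits (i + K)
  refine ⟨j - i, by omega, ?_⟩
  rw [sub_nsmul g (by omega : i ≤ j), ← sub_eq_add_neg]
  exact hWU (Set.mk_mem_prod hi hj)

theorem nearestIntDist_eq_norm (x : ℝ) : nearestIntDist x = ‖(x : UnitAddCircle)‖ :=
  UnitAddCircle.norm_eq.symm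

theorem nearestIntDist_add_le (x y : ℝ) : nearestIntDist (x + y) ≤ nearestIntDist x + |y| :=
  calc nearestIntDist (x + y) ≤ |x + y - round x| := round_le _ _
    _ ≤ |x - round x| + |y| := by rw [add_sub_right_comm]; exact abs_add_le _ _

theorem nearestIntDist_round_mul_le (x μ : ℝ) :
    nearestIntDist (round x * μ) ≤ nearestIntDist (x * μ) + |μ| * nearestIntDist x :=
  calc nearestIntDist (round x * μ) = nearestIntDist (x * μ + (round x - x) * μ) := by
        congr 1; ring
    _ ≤ nearestIntDist (x * μ) + |(round x - x) * μ| := nearestIntDist_add_le _ _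
    _ = nearestIntDist (x * μ) + |μ| * nearestIntDist x := by
        rw [abs_mul, abs_sub_comm, mul_comm |μ|]; rfl

noncomputable def nearestMultiple (N : ℕ) (Δ t : ℝ) : ℕ := N * (round (t / (N * Δ))).toNat

section nearestMultiple

variable {N : ℕ} {Δ t : ℝ}

theorem dvd_nearestMultiple : N ∣ nearestMultiple N Δ t := Dvd.intro _ rfl

theorem cast_nearestMultiple (hΔ : 0 ≤ Δ) (ht : 0 ≤ t) :
    (nearestMultiple N Δ t : ℝ) = N * round (t / (N * Δ)) := by
  have hround : 0 ≤ round (t / (N * Δ)) := by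
    rw [round_eq]
    exact Int.floor_nonneg.2 (by positivity)
  rw [nearestMultiple, Nat.cast_mul, ← Int.cast_natCast (Int.toNat _), Int.toNat_of_nonneg hround]

theorem lt_nearestMultiple (hN : 0 < N) (hΔ : 0 < Δ) {K : ℕ} (ht : (K + 1) * (N * Δ) ≤ t) :
    K < nearestMultiple N Δ t := by
  have hx : (K : ℝ) + 1 ≤ t / (N * Δ) := (le_div_iff₀ (by positivity)).2 ht
  have hK : (K : ℝ) < round (t / (N * Δ)) := by
    linarith [sub_half_lt_round (t / (N * Δ))]
  have hK' : K < (round (t / (N * Δ))).toNat := Int.lt_toNat.2 (by exact_mod_cast hK)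
  exact hK'.trans_le (Nat.le_mul_of_pos_left _ hN)

theorem abs_nearestMultiple_mul_sub (hN : 0 < N) (hΔ : 0 < Δ) (ht : 0 ≤ t) :
    |nearestMultiple N Δ t * Δ - t| = N * Δ * nearestIntDist (t / (N * Δ)) := by
  have hNΔ : (0 : ℝ) < N * Δ := by positivity
  have h : (N : ℝ) * round (t / (N * Δ)) * Δ - t =
      (round (t / (N * Δ)) - t / (N * Δ)) * (N * Δ) := by
    field_simp
  rw [cast_nearestMultiple hΔ.le ht, h, abs_mul, abs_of_pos hNΔ, nearestIntDist, abs_sub_comm,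
    mul_comm]

theorem nearestIntDist_nearestMultiple_mul_le (hN : 0 < N) (hΔ : 0 < Δ) (ht : 0 ≤ t) (μ : ℝ) :
    nearestIntDist (nearestMultiple N Δ t * μ) ≤
      nearestIntDist (t * (μ / Δ)) + N * |μ| * nearestIntDist (t / (N * Δ)) := by
  have h : t / (N * Δ) * (N * μ) = t * (μ / Δ) := by
    field_simp
  calc nearestIntDist (nearestMultiple N Δ t * μ)
        = nearestIntDist (round (t / (N * Δ)) * (N * μ)) := by
          rw [cast_nearestMultiple hΔ.le ht]; ring_nf
    _ ≤ nearestIntDist (t / (N * Δ) * (N * μ)) + |N * μ| * nearestIntDist (t / (N * Δ)) :=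
          nearestIntDist_round_mul_le _ _
    _ = nearestIntDist (t * (μ / Δ)) + N * |μ| * nearestIntDist (t / (N * Δ)) := by
          rw [h, abs_mul, Nat.abs_cast]

end nearestMultiple

theorem index_recurrence_diophantine_general (r m : ℕ)
    (lam : Fin r → Fin m → ℝ) (Δ : Fin r → ℝ) (hΔ : ∀ i, 0 < Δ i)
    (ε : ℝ) (hε : 0 < ε) (N : ℕ) (hN : 0 < N) (K : ℕ) :
    ∃ (k : Fin r → ℕ) (d : ℤ),
      (∀ i : Fin r, 0 < k i ∧ N ∣ k i ∧ K ≤ k i) ∧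
      (∀ i : Fin r, (∀ q : Fin m, nearestIntDist ((k i : ℝ) * lam i q) < ε) ∧
        |(k i : ℝ) * Δ i - (d : ℝ)| < ε) := by
  let g : (Fin r → UnitAddCircle) × (Fin r → Fin m → UnitAddCircle) :=
    (fun i => ↑(1 / (N * Δ i)), fun i q => ↑(lam i q / Δ i))
  have hreturns := frequently_nsmul_mem_of_mem_nhds_zero g
    (U := {v | ∀ i, N * Δ i * ‖v.1 i‖ < ε ∧ ∀ q, ‖v.2 i q‖ + N * |lam i q| * ‖v.1 i‖ < ε})
    (eventually_all.2 fun i =>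
      ((Continuous.tendsto' (by fun_prop) 0 0 (by simp)).eventually_lt_const hε).and
      (eventually_all.2 fun q =>
        (Continuous.tendsto' (by fun_prop) 0 0 (by simp)).eventually_lt_const hε))
  have hlarge : ∀ᶠ n : ℕ in atTop, ∀ i, (K + 1) * (N * Δ i) ≤ n :=
    eventually_all.2 fun i => tendsto_natCast_atTop_atTop.eventually_ge_atTop _
  obtain ⟨n, hclose, hn⟩ := (hreturns.and_eventually hlarge).exists
  simp only [g, Set.mem_ofPred_eq, Prod.smul_fst, Prod.smul_snd, Pi.smul_apply,
    ← AddCircle.coe_nsmul, ← nearestIntDist_eq_norm, nsmul_eq_mul, mul_one_div] at hclose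
  refine ⟨fun i => nearestMultiple N (Δ i) n, n, fun i => ?_, fun i => ⟨fun q => ?_, ?_⟩⟩
  · have hK := lt_nearestMultiple hN (hΔ i) (hn i)
    exact ⟨(Nat.zero_le K).trans_lt hK, dvd_nearestMultiple, hK.le⟩
  · exact (nearestIntDist_nearestMultiple_mul_le hN (hΔ i) n.cast_nonneg _).trans_lt
      ((hclose i).2 q)
  · rw [Int.cast_natCast, abs_nearestMultiple_mul_sub hN (hΔ i) n.cast_nonneg]
    exact (hclose i).1

/-- The Diophantine core of the index recurrence theorem: if all mean indices `Δ i` are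
positive, then for any `ε > 0`, any positive integer `N` and any `K`, there are positive
integers `k 1, …, k r`, all divisible by `N` and at least `K`, and a single integer `d`,
such that each `k i · λ i q` is within `ε` of an integer and each `k i · Δ i` is within
`ε` of `d`. -/
theorem index_recurrence_diophantine (r m : ℕ) (hr : 0 < r)
    (lam : Fin r → Fin m → ℝ) (Δ : Fin r → ℝ) (hΔ : ∀ i, 0 < Δ i)
    (ε : ℝ) (hε : 0 < ε) (N : ℕ) (hN : 0 < N) (K : ℕ) :
    ∃ (k : Fin r → ℕ) (d : ℤ),
      (∀ i : Fin r, 0 < k i ∧ N ∣ k i ∧ K ≤ k i) ∧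
      (∀ i : Fin r, (∀ q : Fin m, nearestIntDist ((k i : ℝ) * lam i q) < ε) ∧
        |(k i : ℝ) * Δ i - (d : ℝ)| < ε) :=
  index_recurrence_diophantine_general r m lam Δ hΔ ε hε N hN K
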